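/- arXiv:1011.0081 — 2 statements merged into one kernel-verified Lean document; each statement's English description precedes it below -/
import Mathlib

section
/- Let u : ℝ² → ℝ be a smooth function satisfying u·u_{xy} − u_x·u_y = 0 identically on ℝ², and let s, r : ℝ → ℝ be smooth functions. Define ξ : ℝ² → ℝ by ξ(x,y) = (s(y) + r(x))·u(x,y). Then ξ satisfies the linearized 2-d'Alembert equation at u: ξ·u_{xy} + u·ξ_{xy} − ξ_x·u_y − ξ_y·u_x = 0 identically on ℝ². -/
/-- Partial derivative in the first coordinate of `ℝ × ℝ`. -/
noncomputable def pdx (f : ℝ × ℝ → ℝ) : ℝ × ℝ → ℝ :=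
  fun p => deriv (fun t => f (t, p.2)) p.1

/-- Partial derivative in the second coordinate of `ℝ × ℝ`. -/
noncomputable def pdy (f : ℝ × ℝ → ℝ) : ℝ × ℝ → ℝ :=
  fun p => deriv (fun t => f (p.1, t)) p.2

lemma diffX (f : ℝ × ℝ → ℝ) (hf : Differentiable ℝ f) (y : ℝ) :
    Differentiable ℝ (fun t => f (t, y)) :=
  hf.comp (differentiable_id.prodMk (differentiable_const y))

lemma diffY (f : ℝ × ℝ → ℝ) (hf : Differentiable ℝ f) (x : ℝ) :
    Differentiable ℝ (fun t => f (x, t)) :=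
  hf.comp ((differentiable_const x).prodMk differentiable_id)

lemma pdy_eq (f : ℝ × ℝ → ℝ) (hf : ContDiff ℝ (⊤ : ℕ∞) f) :
    pdy f = fun p => fderiv ℝ f p (0, 1) := by
  funext p
  have h1 : HasFDerivAt (fun t : ℝ => (p.1, t))
      ((0 : ℝ →L[ℝ] ℝ).prod (ContinuousLinearMap.id ℝ ℝ)) p.2 :=
    (hasFDerivAt_const p.1 p.2).prodMk (hasFDerivAt_id p.2)
  have h2 : HasFDerivAt f (fderiv ℝ f (p.1, p.2)) (p.1, p.2) :=
    (hf.differentiable (by simp) (p.1, p.2)).hasFDerivAt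
  have h3 := (h2.comp p.2 h1).hasDerivAt
  simpa [pdy, Function.comp_def] using h3.deriv

lemma pdx_eq (f : ℝ × ℝ → ℝ) (hf : ContDiff ℝ (⊤ : ℕ∞) f) :
    pdx f = fun p => fderiv ℝ f p (1, 0) := by
  funext p
  have h1 : HasFDerivAt (fun t : ℝ => (t, p.2))
      ((ContinuousLinearMap.id ℝ ℝ).prod (0 : ℝ →L[ℝ] ℝ)) p.1 :=
    (hasFDerivAt_id p.1).prodMk (hasFDerivAt_const p.2 p.1)
  have h2 : HasFDerivAt f (fderiv ℝ f (p.1, p.2)) (p.1, p.2) :=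
    (hf.differentiable (by simp) (p.1, p.2)).hasFDerivAt
  have h3 := (h2.comp p.1 h1).hasDerivAt
  simpa [pdx, Function.comp_def] using h3.deriv

lemma pdy_smooth (f : ℝ × ℝ → ℝ) (hf : ContDiff ℝ (⊤ : ℕ∞) f) : ContDiff ℝ (⊤ : ℕ∞) (pdy f) := by
  rw [pdy_eq f hf]
  exact (hf.fderiv_right (by simp)).clm_apply contDiff_const

lemma pdx_smooth (f : ℝ × ℝ → ℝ) (hf : ContDiff ℝ (⊤ : ℕ∞) f) : ContDiff ℝ (⊤ : ℕ∞) (pdx f) := by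
  rw [pdx_eq f hf]
  exact (hf.fderiv_right (by simp)).clm_apply contDiff_const

/-- if smooth `u` solves `u·u_{xy} − uₓ·uᵧ = 0`, then for smooth
`s, r : ℝ → ℝ`, the function `ξ(x,y) = (s(y)+r(x))·u(x,y)` solves the linearized
equation `ξ·u_{xy} + u·ξ_{xy} − ξₓ·uᵧ − ξᵧ·uₓ = 0`. -/
theorem stmt5 (u : ℝ × ℝ → ℝ) (hu : ContDiff ℝ (⊤ : ℕ∞) u)
    (hsol : ∀ p : ℝ × ℝ, u p * pdx (pdy u) p - pdx u p * pdy u p = 0)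
    (s r : ℝ → ℝ) (hs : ContDiff ℝ (⊤ : ℕ∞) s) (hr : ContDiff ℝ (⊤ : ℕ∞) r) :
    ∀ p : ℝ × ℝ,
      (fun q : ℝ × ℝ => (s q.2 + r q.1) * u q) p * pdx (pdy u) p
        + u p * pdx (pdy (fun q : ℝ × ℝ => (s q.2 + r q.1) * u q)) p
        - pdx (fun q : ℝ × ℝ => (s q.2 + r q.1) * u q) p * pdy u p
        - pdy (fun q : ℝ × ℝ => (s q.2 + r q.1) * u q) p * pdx u p = 0 := by
  intro p
  have hud : Differentiable ℝ u := hu.differentiable (by simp)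
  have hsd : Differentiable ℝ s := hs.differentiable (by simp)
  have hrd : Differentiable ℝ r := hr.differentiable (by simp)
  have hpyud : Differentiable ℝ (pdy u) := (pdy_smooth u hu).differentiable (by simp)
  set ξ : ℝ × ℝ → ℝ := fun q : ℝ × ℝ => (s q.2 + r q.1) * u q with hξ
  -- pdy ξ
  have hy : pdy ξ = fun q => deriv s q.2 * u q + (s q.2 + r q.1) * pdy u q := by
    funext q
    have h1 : DifferentiableAt ℝ (fun t => s t + r q.1) q.2 :=
      (hsd q.2).add_const _
    have h2 : DifferentiableAt ℝ (fun t => u (q.1, t)) q.2 := diffY u hud q.1 q.2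
    have := deriv_fun_mul h1 h2
    simp only [pdy, hξ]
    rw [show (fun t => (s t + r q.1) * u (q.1, t))
        = fun t => (fun t => s t + r q.1) t * (fun t => u (q.1, t)) t from rfl, this,
      deriv_add_const]
  -- pdx ξ
  have hx : ∀ q : ℝ × ℝ, pdx ξ q = deriv r q.1 * u q + (s q.2 + r q.1) * pdx u q := by
    intro q
    have h1 : DifferentiableAt ℝ (fun t => s q.2 + r t) q.1 :=
      (hrd q.1).const_add _
    have h2 : DifferentiableAt ℝ (fun t => u (t, q.2)) q.1 := diffX u hud q.2 q.1
    have := deriv_fun_mul h1 h2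
    simp only [pdx, hξ]
    rw [show (fun t => (s q.2 + r t) * u (t, q.2))
        = fun t => (fun t => s q.2 + r t) t * (fun t => u (t, q.2)) t from rfl, this,
      deriv_const_add]
  -- pdx (pdy ξ)
  have hxy : pdx (pdy ξ) p
      = deriv s p.2 * pdx u p + deriv r p.1 * pdy u p + (s p.2 + r p.1) * pdx (pdy u) p := by
    rw [hy]
    simp only [pdx]
    have h1 : DifferentiableAt ℝ (fun t => deriv s p.2 * u (t, p.2)) p.1 :=
      (diffX u hud p.2 p.1).const_mul _
    have h2 : DifferentiableAt ℝ (fun t => s p.2 + r t) p.1 := (hrd p.1).const_add _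
    have h3 : DifferentiableAt ℝ (fun t => pdy u (t, p.2)) p.1 := diffX (pdy u) hpyud p.2 p.1
    rw [show (fun t => deriv s p.2 * u (t, p.2) + (s p.2 + r t) * pdy u (t, p.2))
        = fun t => (fun t => deriv s p.2 * u (t, p.2)) t
            + ((fun t => s p.2 + r t) t * (fun t => pdy u (t, p.2)) t) from rfl,
      deriv_fun_add h1 (h2.fun_mul h3), deriv_const_mul _ (diffX u hud p.2 p.1), deriv_fun_mul h2 h3,
      deriv_const_add]
    ring
  have hyp := congrFun hy p
  have hxp := hx p
  have h0 := hsol p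
  simp only [hξ] at hxy hyp hxp ⊢
  rw [hxy, hyp, hxp]
  linear_combination (2*(s p.2 + r p.1)) * h0
end

section
/- Let β > 0, α ∈ ℝ, let h : ℝ → ℝ be smooth, and let x₀ ∈ ℝ satisfy h(x₀) > 0. Define u : ℝ² → ℝ by u(x,y) = (β y²/2 + α y + 1)·h(x). Then ξ := u is a solution of the linearized 2-d'Alembert equation at u (i.e. ξ·u_{xy} + u·ξ_{xy} − ξ_x·u_y − ξ_y·u_x = 0 identically), and ξ(x₀, y) → +∞ as y → +∞; in particular the solution u admits an unbounded perturbation, so it is not asymptotically stable. -/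
lemma gDeriv (α β y : ℝ) :
    HasDerivAt (fun t : ℝ => β * t ^ 2 / 2 + α * t + 1) (β * y + α) y := by
  have h1 : HasDerivAt (fun t : ℝ => t ^ 2) (2 * y) y := by
    simpa using hasDerivAt_pow 2 y
  have := (((h1.const_mul β).div_const 2).add ((hasDerivAt_id y).const_mul α)).add_const 1
  exact this.congr_deriv (by ring)

/-- for `β > 0`, `h` smooth with `h(x₀) > 0`, and
`u(x,y) = (β y²/2 + α y + 1)·h(x)`, the perturbation `ξ := u` solves the
linearized 2-d'Alembert equation at `u`, and `ξ(x₀,y) → +∞` as `y → +∞`;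
so `u` admits an unbounded perturbation and is not asymptotically stable. -/
theorem stmt14 (α β : ℝ) (hβ : 0 < β) (h : ℝ → ℝ) (hh : ContDiff ℝ (⊤ : ℕ∞) h)
    (x₀ : ℝ) (hx₀ : 0 < h x₀) :
    (∀ p : ℝ × ℝ,
      (fun q : ℝ × ℝ => (β * q.2 ^ 2 / 2 + α * q.2 + 1) * h q.1) p *
          pdx (pdy (fun q : ℝ × ℝ => (β * q.2 ^ 2 / 2 + α * q.2 + 1) * h q.1)) p
        + (fun q : ℝ × ℝ => (β * q.2 ^ 2 / 2 + α * q.2 + 1) * h q.1) p *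
          pdx (pdy (fun q : ℝ × ℝ => (β * q.2 ^ 2 / 2 + α * q.2 + 1) * h q.1)) p
        - pdx (fun q : ℝ × ℝ => (β * q.2 ^ 2 / 2 + α * q.2 + 1) * h q.1) p *
          pdy (fun q : ℝ × ℝ => (β * q.2 ^ 2 / 2 + α * q.2 + 1) * h q.1) p
        - pdy (fun q : ℝ × ℝ => (β * q.2 ^ 2 / 2 + α * q.2 + 1) * h q.1) p *
          pdx (fun q : ℝ × ℝ => (β * q.2 ^ 2 / 2 + α * q.2 + 1) * h q.1) p = 0) ∧
    Filter.Tendsto (fun y : ℝ => (β * y ^ 2 / 2 + α * y + 1) * h x₀)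
      Filter.atTop Filter.atTop := by
  have hd : Differentiable ℝ h := hh.differentiable (by simp)
  constructor
  · intro p
    have hpdy : ∀ q : ℝ × ℝ,
        pdy (fun q : ℝ × ℝ => (β * q.2 ^ 2 / 2 + α * q.2 + 1) * h q.1) q
          = (β * q.2 + α) * h q.1 := by
      intro q
      exact ((gDeriv α β q.2).mul_const (h q.1)).deriv
    have hpdx : pdx (fun q : ℝ × ℝ => (β * q.2 ^ 2 / 2 + α * q.2 + 1) * h q.1) p
        = (β * p.2 ^ 2 / 2 + α * p.2 + 1) * deriv h p.1 := by
      simp only [pdx]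
      rw [deriv_const_mul _ (hd p.1)]
    have hpdxy : pdx (pdy (fun q : ℝ × ℝ => (β * q.2 ^ 2 / 2 + α * q.2 + 1) * h q.1)) p
        = (β * p.2 + α) * deriv h p.1 := by
      simp only [pdx]
      have : (fun t => pdy (fun q : ℝ × ℝ => (β * q.2 ^ 2 / 2 + α * q.2 + 1) * h q.1) (t, p.2))
          = fun t => (β * p.2 + α) * h t := by
        funext t; exact hpdy (t, p.2)
      rw [this, deriv_const_mul _ (hd p.1)]
    rw [hpdxy, hpdx, hpdy p]
    ring
  · have hg : Filter.Tendsto (fun y : ℝ => β * y ^ 2 / 2 + α * y + 1)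
        Filter.atTop Filter.atTop := by
      have h1 : Filter.Tendsto (fun y : ℝ => y * (β * y / 2 + α))
          Filter.atTop Filter.atTop := by
        apply Filter.Tendsto.atTop_mul_atTop₀ Filter.tendsto_id
        apply Filter.tendsto_atTop_add_const_right
        exact Filter.Tendsto.atTop_div_const two_pos
          (Filter.tendsto_id.const_mul_atTop hβ)
      have h2 := Filter.tendsto_atTop_add_const_right Filter.atTop 1 h1
      convert h2 using 2 with y
      ring
    exact hg.atTop_mul_const hx₀
end
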